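/- arXiv:0907.1806 — 2 statements merged into one kernel-verified Lean document; each statement's English description precedes it below -/
import Mathlib

section
/- Let T and S be Hermitian endomorphisms of an N-dimensional complex inner product space, with operator norm ‖S‖ ≤ ε. If the eigenvalues of T (with multiplicity, in increasing order) are λ₁ ≤ ... ≤ λ_N and those of T + S are μ₁ ≤ ... ≤ μ_N, then |λ_j − μ_j| ≤ ε for every j. -/
/-!
Weyl's argument. The span of the eigenvectors of `T` for `λ₁, …, λⱼ` has dimension `j` and the
span of those of `T + S` for `μⱼ, …, μ_N` has dimension `N - j + 1`, so they share a nonzero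
vector `x`. Its Rayleigh quotients satisfy `R_T(x) ≤ λⱼ` and `μⱼ ≤ R_{T+S}(x) = R_T(x) + R_S(x)`,
and `|R_S(x)| ≤ ‖S‖`; hence `μⱼ - λⱼ ≤ ‖S‖`. Exchanging the roles of `T` and `T + S` gives the
other inequality.
-/

open Module Submodule

theorem Module.Basis.finrank_span_image {K V ι : Type*} [DivisionRing K] [AddCommGroup V]
    [Module K V] (b : Basis ι K V) (s : Finset ι) : finrank K (span K (b '' s)) = s.card := by
  rw [Set.image_eq_range]
  exact (finrank_span_eq_card (b.linearIndependent.comp _ Subtype.val_injective)).trans (by simp)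

theorem Submodule.exists_ne_zero_mem_inf_of_finrank_lt {K V : Type*} [DivisionRing K]
    [AddCommGroup V] [Module K V] [FiniteDimensional K V] {U W : Submodule K V}
    (h : finrank K V < finrank K U + finrank K W) :
    ∃ x ≠ 0, x ∈ U ∧ x ∈ W := by
  by_contra! hUW
  exact h.not_ge (finrank_add_finrank_le_of_disjoint
    (disjoint_def.mpr fun x hU hW => by_contra fun hx => hUW x hx hU hW))

theorem Module.Basis.exists_ne_zero_mem_span_Iic_inf_span_Ici {K V : Type*} [DivisionRing K]
    [AddCommGroup V] [Module K V] {n : ℕ} (b b' : Basis (Fin n) K V) (j : Fin n) :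
    ∃ x ≠ 0, x ∈ span K (b '' Set.Iic j) ∧ x ∈ span K (b' '' Set.Ici j) := by
  have : FiniteDimensional K V := .of_basis b
  apply exists_ne_zero_mem_inf_of_finrank_lt
  rw [← Finset.coe_Iic, ← Finset.coe_Ici, b.finrank_span_image, b'.finrank_span_image,
    finrank_eq_card_basis b, Fin.card_Iic, Fin.card_Ici, Fintype.card_fin]
  omega

namespace OrthonormalBasis

variable {𝕜 E ι : Type*} [RCLike 𝕜] [NormedAddCommGroup E] [InnerProductSpace 𝕜 E] [Fintype ι]
  (b : OrthonormalBasis ι 𝕜 E)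

theorem repr_eq_zero_of_mem_span_image {s : Set ι} {x : E} (hx : x ∈ span 𝕜 (b '' s)) {i : ι}
    (hi : i ∉ s) : b.repr x i = 0 := by
  rw [← b.coe_toBasis, Basis.mem_span_image] at hx
  rw [← b.coe_toBasis_repr_apply]
  exact Finsupp.notMem_support_iff.mp fun h => hi (hx h)

theorem repr_map_apply_eq_mul {A : E →L[𝕜] E} {ν : ι → ℝ} (hA : ∀ i, A (b i) = (ν i : 𝕜) • b i)
    (x : E) (i : ι) : b.repr (A x) i = ν i * b.repr x i := by
  classical
  conv_lhs => rw [← b.sum_repr x]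
  simp [map_sum, hA, Pi.single_apply, RCLike.real_smul_eq_coe_mul, mul_comm]

theorem reApplyInnerSelf_eq_sum {A : E →L[𝕜] E} {ν : ι → ℝ} (hA : ∀ i, A (b i) = (ν i : 𝕜) • b i)
    (x : E) : A.reApplyInnerSelf x = ∑ i, ν i * ‖b.repr x i‖ ^ 2 := by
  rw [A.reApplyInnerSelf_apply, ← b.repr.inner_map_map, PiLp.inner_apply, map_sum]
  congr 1 with i
  rw [b.repr_map_apply_eq_mul hA, RCLike.inner_apply, map_mul (starRingEnd 𝕜), RCLike.conj_ofReal,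
    mul_left_comm, RCLike.mul_conj]
  norm_cast

theorem rayleighQuotient_le_of_mem_span_image {A : E →L[𝕜] E} {ν : ι → ℝ}
    (hA : ∀ i, A (b i) = (ν i : 𝕜) • b i) {s : Set ι} {c : ℝ} (hν : ∀ i ∈ s, ν i ≤ c) {x : E}
    (hx0 : x ≠ 0) (hx : x ∈ span 𝕜 (b '' s)) : A.rayleighQuotient x ≤ c := by
  rw [ContinuousLinearMap.rayleighQuotient, div_le_iff₀ (by positivity),
    b.reApplyInnerSelf_eq_sum hA, ← b.repr.norm_map, EuclideanSpace.norm_sq_eq, Finset.mul_sum]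
  refine Finset.sum_le_sum fun i _ => ?_
  by_cases hi : i ∈ s
  · exact mul_le_mul_of_nonneg_right (hν i hi) (by positivity)
  · simp [b.repr_eq_zero_of_mem_span_image hx hi]

theorem le_rayleighQuotient_of_mem_span_image {A : E →L[𝕜] E} {ν : ι → ℝ}
    (hA : ∀ i, A (b i) = (ν i : 𝕜) • b i) {s : Set ι} {c : ℝ} (hν : ∀ i ∈ s, c ≤ ν i) {x : E}
    (hx0 : x ≠ 0) (hx : x ∈ span 𝕜 (b '' s)) : c ≤ A.rayleighQuotient x := by
  have h := b.rayleighQuotient_le_of_mem_span_image (A := -A) (ν := -ν) (fun i => by simp [hA])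
    (fun i hi => neg_le_neg (hν i hi)) hx0 hx
  simpa using h

theorem eigenvalue_sub_le_opNorm_sub {n : ℕ} (b b' : OrthonormalBasis (Fin n) 𝕜 E)
    {A B : E →L[𝕜] E} {ν ν' : Fin n → ℝ} (hν : Monotone ν) (hν' : Monotone ν')
    (hA : ∀ i, A (b i) = (ν i : 𝕜) • b i) (hB : ∀ i, B (b' i) = (ν' i : 𝕜) • b' i) (j : Fin n) :
    ν' j - ν j ≤ ‖B - A‖ := by
  obtain ⟨x, hx0, hxA, hxB⟩ := b.toBasis.exists_ne_zero_mem_span_Iic_inf_span_Ici b'.toBasis j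
  rw [b.coe_toBasis] at hxA
  rw [b'.coe_toBasis] at hxB
  have hAx := b.rayleighQuotient_le_of_mem_span_image hA (fun i hi => hν hi) hx0 hxA
  have hBx := b'.le_rayleighQuotient_of_mem_span_image hB (fun i hi => hν' hi) hx0 hxB
  have hsplit := A.rayleighQuotient_add (B - A) (x := x)
  rw [add_sub_cancel] at hsplit
  linarith [le_of_abs_le ((B - A).rayleighQuotient_le_norm x)]

end OrthonormalBasis

theorem eigenvalue_perturbation_general
    {V : Type*} [NormedAddCommGroup V] [InnerProductSpace ℂ V]
    (N : ℕ)
    (T S : V →L[ℂ] V)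
    (ε : ℝ) (hε : ‖S‖ ≤ ε)
    (lam mu : Fin N → ℝ) (hlam : Monotone lam) (hmu : Monotone mu)
    (bT : OrthonormalBasis (Fin N) ℂ V) (hbT : ∀ j, T (bT j) = (lam j : ℂ) • bT j)
    (bTS : OrthonormalBasis (Fin N) ℂ V)
    (hbTS : ∀ j, (T + S) (bTS j) = (mu j : ℂ) • bTS j) :
    ∀ j, |lam j - mu j| ≤ ε := by
  intro j
  have hup := bT.eigenvalue_sub_le_opNorm_sub bTS hlam hmu hbT hbTS j
  have hdown := bTS.eigenvalue_sub_le_opNorm_sub bT hmu hlam hbTS hbT j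
  rw [add_sub_cancel_left] at hup
  rw [sub_add_cancel_left, norm_neg] at hdown
  exact abs_sub_le_iff.mpr ⟨by linarith, by linarith⟩

/-- Perturbation of eigenvalues of a Hermitian endomorphism: if `S` has operator
norm at most `ε`, the ordered eigenvalues of `T` and `T + S` differ by at most `ε`. -/
theorem eigenvalue_perturbation
    {V : Type*} [NormedAddCommGroup V] [InnerProductSpace ℂ V] [FiniteDimensional ℂ V]
    (N : ℕ) (hN : Module.finrank ℂ V = N)
    (T S : V →L[ℂ] V) (hT : IsSelfAdjoint T) (hS : IsSelfAdjoint S)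
    (ε : ℝ) (hε : ‖S‖ ≤ ε)
    (lam mu : Fin N → ℝ) (hlam : Monotone lam) (hmu : Monotone mu)
    (bT : OrthonormalBasis (Fin N) ℂ V) (hbT : ∀ j, T (bT j) = (lam j : ℂ) • bT j)
    (bTS : OrthonormalBasis (Fin N) ℂ V)
    (hbTS : ∀ j, (T + S) (bTS j) = (mu j : ℂ) • bTS j) :
    ∀ j, |lam j - mu j| ≤ ε :=
  eigenvalue_perturbation_general N T S ε hε lam mu hlam hmu bT hbT bTS hbTS
end

section
/- Let (ν_k), (μ_k⁰), (μ_k¹) be sequences of probability measures on ℝ, all supported in a fixed compact interval [−M, M], and let μ be a probability measure on [−M, M]. Suppose that for every continuous increasing function f : ℝ → ℝ one has ∫ f dμ_k⁰ ≤ ∫ f dν_k ≤ ∫ f dμ_k¹ for all k, and that both ∫ f dμ_k⁰ → ∫ f dμ and ∫ f dμ_k¹ → ∫ f dμ. Then ν_k converges weakly to μ. -/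
open MeasureTheory Filter Topology

private lemma integrable_of_bdd {ρ : Measure ℝ} [IsFiniteMeasure ρ] {f : ℝ → ℝ}
    (hf : Continuous f) (C : ℝ) (h : ∀ x, |f x| ≤ C) : Integrable f ρ := by
  refine Integrable.mono' (integrable_const C) hf.aestronglyMeasurable
    (ae_of_all _ fun x => ?_)
  simpa [Real.norm_eq_abs] using h x

/-- Squeeze theorem for weak convergence of probability measures on a compact interval:
if `∫ f dμ_k⁰ ≤ ∫ f dν_k ≤ ∫ f dμ_k¹` for every continuous increasing `f`, and both
outer sequences of integrals converge to `∫ f dμ`, then `ν_k → μ` weakly. -/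
theorem weak_convergence_of_squeeze
    (M : ℝ) (ν μ0 μ1 : ℕ → Measure ℝ) (μ : Measure ℝ)
    (hν : ∀ k, IsProbabilityMeasure (ν k))
    (hμ0 : ∀ k, IsProbabilityMeasure (μ0 k))
    (hμ1 : ∀ k, IsProbabilityMeasure (μ1 k))
    (hμ : IsProbabilityMeasure μ)
    (hνsupp : ∀ k, ν k (Set.Icc (-M) M)ᶜ = 0)
    (hμ0supp : ∀ k, μ0 k (Set.Icc (-M) M)ᶜ = 0)
    (hμ1supp : ∀ k, μ1 k (Set.Icc (-M) M)ᶜ = 0)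
    (hμsupp : μ (Set.Icc (-M) M)ᶜ = 0)
    (hsqueeze : ∀ f : ℝ → ℝ, Continuous f → Monotone f →
      ∀ k, (∫ x, f x ∂(μ0 k)) ≤ (∫ x, f x ∂(ν k)) ∧ (∫ x, f x ∂(ν k)) ≤ ∫ x, f x ∂(μ1 k))
    (hconv0 : ∀ f : ℝ → ℝ, Continuous f → Monotone f →
      Tendsto (fun k => ∫ x, f x ∂(μ0 k)) atTop (𝓝 (∫ x, f x ∂μ)))
    (hconv1 : ∀ f : ℝ → ℝ, Continuous f → Monotone f →
      Tendsto (fun k => ∫ x, f x ∂(μ1 k)) atTop (𝓝 (∫ x, f x ∂μ))) :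
    ∀ f : ℝ → ℝ, Continuous f → (∃ C, ∀ x, |f x| ≤ C) →
      Tendsto (fun k => ∫ x, f x ∂(ν k)) atTop (𝓝 (∫ x, f x ∂μ)) := by
  intro f hf ⟨C, hC⟩
  -- The interval is nonempty
  have hMM : -M ≤ M := by
    by_contra h
    have hempty : Set.Icc (-M) M = ∅ := Set.Icc_eq_empty h
    have : μ Set.univ = 0 := by
      have := hμsupp
      rw [hempty, Set.compl_empty] at this
      exact this
    simp [hμ.measure_univ] at this
  have hM0 : 0 ≤ M := by linarith
  -- projection onto the interval
  set proj : ℝ → ℝ := fun x => max (-M) (min x M) with hproj_def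
  have hproj_mono : Monotone proj := monotone_const.max (monotone_id.min monotone_const)
  have hproj_cont : Continuous proj :=
    continuous_const.max (continuous_id.min continuous_const)
  have hproj_mem : ∀ x, proj x ∈ Set.Icc (-M) M := fun x =>
    ⟨le_max_left _ _, max_le hMM (min_le_right _ _)⟩
  have hproj_eq : ∀ x ∈ Set.Icc (-M) M, proj x = x := by
    intro x hx
    simp only [hproj_def]
    rw [min_eq_left hx.2, max_eq_right hx.1]
  -- ε-argument
  rw [Metric.tendsto_nhds]
  intro ε hε
  have hε4 : 0 < ε / 4 := by linarith
  -- polynomial approximation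
  obtain ⟨p, hp⟩ := exists_polynomial_near_of_continuousOn (-M) M f hf.continuousOn (ε / 4) hε4
  -- Lipschitz bound for the polynomial on the interval
  obtain ⟨L, hL⟩ := IsCompact.exists_bound_of_continuousOn (isCompact_Icc (a := -M) (b := M))
    (Polynomial.continuous p.derivative).continuousOn
  have hL0 : 0 ≤ L := le_trans (norm_nonneg _) (hL (-M) (Set.left_mem_Icc.2 hMM))
  have hlip : LipschitzOnWith L.toNNReal (fun x => p.eval x) (Set.Icc (-M) M) := by
    apply (convex_Icc (-M) M).lipschitzOnWith_of_nnnorm_deriv_le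
      (fun x _ => p.differentiableAt)
    intro x hx
    rw [Polynomial.deriv]
    rw [← NNReal.coe_le_coe, coe_nnnorm, Real.coe_toNNReal _ hL0]
    exact hL x hx
  have hlip' : ∀ a ∈ Set.Icc (-M) M, ∀ b ∈ Set.Icc (-M) M,
      |p.eval a - p.eval b| ≤ L * |a - b| := by
    intro a ha b hb
    have := hlip.dist_le_mul a ha b hb
    rwa [Real.dist_eq, Real.dist_eq, Real.coe_toNNReal _ hL0] at this
  -- monotone pieces
  set g : ℝ → ℝ := fun x => p.eval (proj x) + L * proj x with hg_def
  set h : ℝ → ℝ := fun x => L * proj x with hh_def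
  have hg_cont : Continuous g :=
    ((p.continuous_aeval).comp hproj_cont).add (continuous_const.mul hproj_cont)
  have hh_cont : Continuous h := continuous_const.mul hproj_cont
  have hg_mono : Monotone g := by
    intro x y hxy
    have hab : proj x ≤ proj y := hproj_mono hxy
    have ha := hproj_mem x
    have hb := hproj_mem y
    have hd := hlip' (proj x) ha (proj y) hb
    rw [abs_of_nonpos (by linarith : proj x - proj y ≤ 0)] at hd
    have := abs_le.mp hd
    simp only [hg_def]
    nlinarith [this.1, this.2]
  have hh_mono : Monotone h := fun x y hxy =>
    mul_le_mul_of_nonneg_left (hproj_mono hxy) hL0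
  -- the approximation φ = g - h
  set φ : ℝ → ℝ := fun x => p.eval (proj x) with hφ_def
  have hφ_cont : Continuous φ := (p.continuous_aeval).comp hproj_cont
  -- bounds
  obtain ⟨P, hP⟩ := IsCompact.exists_bound_of_continuousOn (isCompact_Icc (a := -M) (b := M))
    (Polynomial.continuous p).continuousOn
  have hφ_bdd : ∀ x, |φ x| ≤ P := fun x => hP (proj x) (hproj_mem x)
  have hproj_bdd : ∀ x, |proj x| ≤ M := fun x =>
    abs_le.2 ⟨(hproj_mem x).1, (hproj_mem x).2⟩
  have hh_bdd : ∀ x, |h x| ≤ L * M := fun x => by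
    simp only [hh_def, abs_mul, abs_of_nonneg hL0]
    exact mul_le_mul_of_nonneg_left (hproj_bdd x) hL0
  have hg_bdd : ∀ x, |g x| ≤ P + L * M := fun x =>
    le_trans (abs_add_le _ _) (add_le_add (hφ_bdd x) (hh_bdd x))
  -- key: for any probability measure supported in the interval, ∫f and ∫φ are ε/4-close
  have key : ∀ ρ : Measure ℝ, IsProbabilityMeasure ρ → ρ (Set.Icc (-M) M)ᶜ = 0 →
      |(∫ x, f x ∂ρ) - ∫ x, φ x ∂ρ| ≤ ε / 4 := by
    intro ρ hρ hρsupp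
    have hfi : Integrable f ρ := integrable_of_bdd hf C hC
    have hφi : Integrable φ ρ := integrable_of_bdd hφ_cont P hφ_bdd
    rw [← integral_sub hfi hφi]
    have hae : ∀ᵐ x ∂ρ, x ∈ Set.Icc (-M) M := by
      rw [ae_iff]
      simpa [Set.compl_def] using hρsupp
    have hb : ∀ᵐ x ∂ρ, ‖f x - φ x‖ ≤ ε / 4 := by
      filter_upwards [hae] with x hx
      rw [Real.norm_eq_abs]
      have : φ x = p.eval x := by rw [hφ_def]; simp [hproj_eq x hx]
      rw [this]
      have := hp x hx
      rw [abs_sub_comm]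
      linarith [le_of_lt this, abs_nonneg (p.eval x - f x)]
    calc |∫ x, (f x - φ x) ∂ρ| ≤ ε / 4 * (ρ Set.univ).toReal :=
          norm_integral_le_of_norm_le_const hb
      _ = ε / 4 := by simp [hρ.measure_univ]
  -- convergence of ∫φ dν_k via squeeze on g and h
  have hgconv : Tendsto (fun k => ∫ x, g x ∂(ν k)) atTop (𝓝 (∫ x, g x ∂μ)) :=
    tendsto_of_tendsto_of_tendsto_of_le_of_le (hconv0 g hg_cont hg_mono)
      (hconv1 g hg_cont hg_mono) (fun k => (hsqueeze g hg_cont hg_mono k).1)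
      (fun k => (hsqueeze g hg_cont hg_mono k).2)
  have hhconv : Tendsto (fun k => ∫ x, h x ∂(ν k)) atTop (𝓝 (∫ x, h x ∂μ)) :=
    tendsto_of_tendsto_of_tendsto_of_le_of_le (hconv0 h hh_cont hh_mono)
      (hconv1 h hh_cont hh_mono) (fun k => (hsqueeze h hh_cont hh_mono k).1)
      (fun k => (hsqueeze h hh_cont hh_mono k).2)
  have hφ_eq : ∀ ρ : Measure ℝ, IsProbabilityMeasure ρ →
      (∫ x, φ x ∂ρ) = (∫ x, g x ∂ρ) - ∫ x, h x ∂ρ := by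
    intro ρ hρ
    rw [← integral_sub (integrable_of_bdd hg_cont _ hg_bdd)
      (integrable_of_bdd hh_cont _ hh_bdd)]
    congr 1
    ext x
    simp [hφ_def, hg_def, hh_def]
  have hφconv : Tendsto (fun k => ∫ x, φ x ∂(ν k)) atTop (𝓝 (∫ x, φ x ∂μ)) := by
    have := hgconv.sub hhconv
    rw [hφ_eq μ hμ]
    refine this.congr fun k => ?_
    rw [hφ_eq (ν k) (hν k)]
  -- final estimate
  have hev : ∀ᶠ k in atTop, |(∫ x, φ x ∂(ν k)) - ∫ x, φ x ∂μ| < ε / 4 := by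
    have := Metric.tendsto_nhds.mp hφconv (ε / 4) hε4
    filter_upwards [this] with k hk
    rwa [Real.dist_eq] at hk
  filter_upwards [hev] with k hk
  rw [Real.dist_eq]
  have h1 := key (ν k) (hν k) (hνsupp k)
  have h2 := key μ hμ hμsupp
  have t1 : |(∫ x, f x ∂(ν k)) - ∫ x, f x ∂μ| ≤
      |(∫ x, f x ∂(ν k)) - ∫ x, φ x ∂(ν k)| + |(∫ x, φ x ∂(ν k)) - ∫ x, f x ∂μ| :=
    abs_sub_le _ _ _
  have t2 : |(∫ x, φ x ∂(ν k)) - ∫ x, f x ∂μ| ≤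
      |(∫ x, φ x ∂(ν k)) - ∫ x, φ x ∂μ| + |(∫ x, φ x ∂μ) - ∫ x, f x ∂μ| :=
    abs_sub_le _ _ _
  rw [abs_sub_comm (∫ x, φ x ∂μ)] at t2
  linarith
end
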